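/- arXiv:1807.03822 — 2 statements merged into one kernel-verified Lean document; each statement's English description precedes it below -/
import Mathlib

section
/- If every continuous real-valued function on a metric space (X,d) is almost uniformly continuous (i.e., X is an AUC space), then (X,d) is cofinally complete. -/
open Metric Filter

/-- A sequence is cofinally Cauchy if for every ε>0 there is an infinite index set
on which all pairwise distances are < ε. -/
def CofinallyCauchy {X : Type*} [MetricSpace X] (x : ℕ → X) : Prop :=
  ∀ ε > 0, ∃ N : Set ℕ, N.Infinite ∧ ∀ n ∈ N, ∀ j ∈ N, dist (x n) (x j) < ε

/-- A function is almost bounded if for every ε>0 there is δ>0 such that the image of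
every set of diameter < δ is contained in a finite union of open ε-balls. -/
def AlmostBounded {X Y : Type*} [MetricSpace X] [MetricSpace Y] (f : X → Y) : Prop :=
  ∀ ε > 0, ∃ δ > 0, ∀ A : Set X, EMetric.diam A < ENNReal.ofReal δ →
    ∃ B : Finset Y, f '' A ⊆ ⋃ b ∈ B, Metric.ball b ε

/-- A metric space is cofinally complete if every cofinally Cauchy sequence clusters. -/
def CofinallyComplete (X : Type*) [MetricSpace X] : Prop :=
  ∀ x : ℕ → X, CofinallyCauchy x → ∃ p : X, MapClusterPt p atTop x

/-- The local total boundedness functional. -/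
noncomputable def tFun {X : Type*} [MetricSpace X] (x : X) : ℝ :=
  sSup {ε : ℝ | 0 < ε ∧ TotallyBounded (Metric.ball x ε)}

/-! If a cofinally Cauchy sequence `x` had no cluster point, every point would have a
neighbourhood visited by `x` only finitely often. Then the range of `x` is closed and discrete
and the fibres of `x` are finite, so by Tietze some continuous `f : X → ℝ` satisfies
`n ≤ f (x n)`. Almost boundedness of `f` makes it bounded on `x '' N` for an infinite `N` on
which `x` has small diameter, which is impossible since `f (x n) ≥ n` along `N`. -/

open Set Topology

theorem exists_mem_nhds_finite_preimage_of_not_mapClusterPt {X : Type*} [TopologicalSpace X]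
    {x : ℕ → X} {p : X} (h : ¬MapClusterPt p atTop x) : ∃ U ∈ 𝓝 p, (x ⁻¹' U).Finite := by
  simp only [mapClusterPt_iff_frequently, not_forall, not_frequently, exists_prop,
    ← Nat.cofinite_eq_atTop, eventually_cofinite, not_not] at h
  exact h

theorem isClosed_and_isDiscrete_of_forall_finite_inter {X : Type*} [TopologicalSpace X]
    [T1Space X] {S : Set X} (h : ∀ p, ∃ U ∈ 𝓝 p, (U ∩ S).Finite) :
    IsClosed S ∧ IsDiscrete S := by
  refine isClosed_and_discrete_iff.2 fun p => ?_
  obtain ⟨U, hU, hfin⟩ := h p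
  rw [disjoint_principal_right]
  have hfar : ((U ∩ S) \ {p})ᶜ ∈ 𝓝[≠] p :=
    nhdsWithin_le_nhds ((hfin.subset sdiff_subset).isClosed.compl_mem_nhds (by simp))
  filter_upwards [hfar, nhdsWithin_le_nhds hU, self_mem_nhdsWithin] with q hqfar hqU hqp hqS
  exact hqfar ⟨⟨hqU, hqS⟩, hqp⟩

theorem IsClosed.exists_continuousMap_extend_of_isDiscrete {X : Type*} [TopologicalSpace X]
    [NormalSpace X] {S : Set X} (hS : IsClosed S) (hd : IsDiscrete S) (g : S → ℝ) :
    ∃ f : C(X, ℝ), ∀ p : S, f p = g p := by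
  have := hd.to_subtype
  obtain ⟨f, hf⟩ := ContinuousMap.exists_restrict_eq hS ⟨g, continuous_of_discreteTopology⟩
  exact ⟨f, fun p => DFunLike.congr_fun hf p⟩

theorem exists_continuousMap_le_comp {X : Type*} [TopologicalSpace X] [NormalSpace X]
    [T1Space X] {x : ℕ → X} (hx : ∀ p, ∃ U ∈ 𝓝 p, (x ⁻¹' U).Finite) :
    ∃ f : C(X, ℝ), ∀ n : ℕ, (n : ℝ) ≤ f (x n) := by
  have hfiber (p : X) : (x ⁻¹' {p}).Finite := by
    obtain ⟨U, hU, hfin⟩ := hx p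
    exact hfin.subset (preimage_mono (singleton_subset_iff.2 (mem_of_mem_nhds hU)))
  obtain ⟨hclosed, hdisc⟩ := isClosed_and_isDiscrete_of_forall_finite_inter fun p => by
    obtain ⟨U, hU, hfin⟩ := hx p
    exact ⟨U, hU, by simpa [image_preimage_eq_inter_range] using hfin.image x⟩
  obtain ⟨f, hf⟩ := hclosed.exists_continuousMap_extend_of_isDiscrete hdisc
    fun p => (sSup (x ⁻¹' {p.1}) : ℕ)
  refine ⟨f, fun n => ?_⟩
  rw [hf ⟨x n, n, rfl⟩]
  exact_mod_cast le_csSup (hfiber (x n)).bddAbove rfl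

theorem AlmostBounded.exists_isBounded_image {X Y : Type*} [MetricSpace X] [MetricSpace Y]
    {f : X → Y} (hf : AlmostBounded f) :
    ∃ δ > 0, ∀ A : Set X, ediam A < ENNReal.ofReal δ → Bornology.IsBounded (f '' A) := by
  obtain ⟨δ, hδ, hcover⟩ := hf 1 one_pos
  refine ⟨δ, hδ, fun A hA => ?_⟩
  obtain ⟨B, hB⟩ := hcover A hA
  exact ((Bornology.isBounded_biUnion_finset B).2 fun b _ => isBounded_ball).subset hB

theorem CofinallyCauchy.exists_infinite_ediam_image_lt {X : Type*} [MetricSpace X]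
    {x : ℕ → X} (hx : CofinallyCauchy x) {δ : ℝ} (hδ : 0 < δ) :
    ∃ N : Set ℕ, N.Infinite ∧ ediam (x '' N) < ENNReal.ofReal δ := by
  obtain ⟨N, hN, hdist⟩ := hx (δ / 2) (half_pos hδ)
  have hhalf : ENNReal.ofReal (δ / 2) < ENNReal.ofReal δ :=
    (ENNReal.ofReal_lt_ofReal_iff hδ).2 (half_lt_self hδ)
  refine ⟨N, hN, lt_of_le_of_lt (ediam_le ?_) hhalf⟩
  rintro _ ⟨n, hn, rfl⟩ _ ⟨j, hj, rfl⟩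
  rw [edist_dist]
  exact ENNReal.ofReal_le_ofReal (hdist n hn j hj).le

/-- If every continuous real-valued function on X is almost uniformly continuous,
then X is cofinally complete. -/
theorem aucSpace_cofinallyComplete {X : Type*} [MetricSpace X]
    (h : ∀ f : X → ℝ, Continuous f → AlmostBounded f) :
    CofinallyComplete X := by
  intro x hx
  by_contra! hcl
  obtain ⟨f, hf⟩ := exists_continuousMap_le_comp fun p =>
    exists_mem_nhds_finite_preimage_of_not_mapClusterPt (hcl p)
  obtain ⟨δ, hδ, hbdd⟩ := (h f f.continuous).exists_isBounded_image
  obtain ⟨N, hN, hdiam⟩ := hx.exists_infinite_ediam_image_lt hδ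
  obtain ⟨M, hM⟩ := (hbdd _ hdiam).bddAbove
  obtain ⟨n, hn, hMn⟩ := hN.exists_gt ⌈M⌉₊
  have hfM : f (x n) ≤ M := hM (mem_image_of_mem f (mem_image_of_mem x hn))
  linarith [hf n, Nat.lt_of_ceil_lt hMn]
end

section
/- A function f between metric spaces (X,d) and (Y,ρ) is CC-regular if and only if it is almost bounded. -/
open Metric Filter

/-!
If `f` is almost bounded and `x` is cofinally Cauchy, an infinite set of indices on which `x` has
small diameter is sent into finitely many `ε/2`-balls, and by pigeonhole infinitely many of its
indices land in the same ball.

Conversely, if `f` is not almost bounded, there are `ε > 0` and sets `Aₙ` of diameter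
`< 1/(n+1)` whose images are covered by no finite family of `ε`-balls. Listing every `Aₙ`
infinitely often (through `Nat.unpair`), one picks inductively `xₘ ∈ A_{(unpair m).1}` whose
image is `ε`-far from all earlier images: `x` is cofinally Cauchy, `f ∘ x` is `ε`-separated.
-/

open Set

theorem Set.Infinite.exists_infinite_inter_of_subset_biUnion {α ι : Type*} {N : Set α}
    (hN : N.Infinite) {B : Finset ι} {S : ι → Set α} (h : N ⊆ ⋃ b ∈ B, S b) :
    ∃ b ∈ B, (N ∩ S b).Infinite := by
  by_contra! hfin
  refine hN ((B.finite_toSet.biUnion hfin).subset fun n hn => ?_)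
  obtain ⟨b, hb, hnb⟩ := mem_iUnion₂.1 (h hn)
  exact mem_iUnion₂.2 ⟨b, hb, hn, hnb⟩

theorem exists_seq_mem_of_forall_finset_exists {α : Type*} (S : ℕ → Set α) (r : α → α → Prop)
    (h : ∀ n (s : Finset α), ∃ y ∈ S n, ∀ x ∈ s, r x y) :
    ∃ x : ℕ → α, (∀ n, x n ∈ S n) ∧ ∀ m n, m < n → r (x m) (x n) := by
  classical
  choose y hyS hyr using h
  let earlier : ℕ → Finset α := fun n => Nat.rec ∅ (fun k s => insert (y k s) s) n
  refine ⟨fun n => y n (earlier n), fun n => hyS _ _, fun m n hmn => hyr _ _ _ ?_⟩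
  induction n with
  | zero => omega
  | succ n ih =>
    rcases Nat.lt_succ_iff_lt_or_eq.1 hmn with hlt | rfl
    · exact Finset.mem_insert_of_mem (ih hlt)
    · exact Finset.mem_insert_self _ _

section CofinallyCauchy

variable {X : Type*} [MetricSpace X]

theorem cofinallyCauchy_iff_ediam_image {x : ℕ → X} :
    CofinallyCauchy x ↔ ∀ ε > 0, ∃ N : Set ℕ, N.Infinite ∧ ediam (x '' N) < ENNReal.ofReal ε := by
  refine ⟨fun hx ε hε => ?_, fun hx ε hε => ?_⟩
  · obtain ⟨N, hN, hd⟩ := hx (ε / 2) (half_pos hε)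
    refine ⟨N, hN, lt_of_le_of_lt (b := ENNReal.ofReal (ε / 2)) ?_
      ((ENNReal.ofReal_lt_ofReal_iff hε).2 (half_lt_self hε))⟩
    exact ediam_image_le_iff.2 fun n hn j hj =>
      (edist_le_ofReal (half_pos hε).le).2 (hd n hn j hj).le
  · obtain ⟨N, hN, hd⟩ := hx ε hε
    refine ⟨N, hN, fun n hn j hj => ?_⟩
    rw [← edist_lt_ofReal]
    exact (edist_le_ediam_of_mem (mem_image_of_mem x hn) (mem_image_of_mem x hj)).trans_lt hd

theorem cofinallyCauchy_of_mem_unpair {A : ℕ → Set X}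
    (hA : ∀ ε > 0, ∃ n, ediam (A n) < ENNReal.ofReal ε) {x : ℕ → X}
    (hx : ∀ m, x m ∈ A (Nat.unpair m).1) : CofinallyCauchy x := by
  refine cofinallyCauchy_iff_ediam_image.2 fun ε hε => ?_
  obtain ⟨n, hn⟩ := hA ε hε
  have hfiber : {m | (Nat.unpair m).1 = n}.Infinite :=
    infinite_of_injective_forall_mem (f := Nat.pair n) (fun k l hkl => (Nat.pair_eq_pair.1 hkl).2)
      fun k => by simp [Nat.unpair_pair]
  refine ⟨_, hfiber, (ediam_mono ?_).trans_lt hn⟩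
  rintro _ ⟨m, hm, rfl⟩
  exact hm ▸ hx m

theorem not_cofinallyCauchy_of_le_dist {y : ℕ → X} {ε : ℝ} (hε : 0 < ε)
    (h : ∀ m n, m < n → ε ≤ dist (y m) (y n)) : ¬ CofinallyCauchy y := by
  intro hy
  obtain ⟨N, hN, hd⟩ := hy ε hε
  obtain ⟨m, hm, n, hn, hmn⟩ := hN.nontrivial
  rcases hmn.lt_or_gt with hlt | hlt
  · exact (h m n hlt).not_gt (hd m hm n hn)
  · exact (h n m hlt).not_gt (hd n hn m hm)

end CofinallyCauchy

section AlmostBounded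

variable {X Y : Type*} [MetricSpace X] [MetricSpace Y] {f : X → Y}

theorem AlmostBounded.cofinallyCauchy_comp (hf : AlmostBounded f) {x : ℕ → X}
    (hx : CofinallyCauchy x) : CofinallyCauchy (f ∘ x) := by
  intro ε hε
  obtain ⟨δ, hδ, hcover⟩ := hf (ε / 2) (half_pos hε)
  obtain ⟨N, hN, hdiam⟩ := cofinallyCauchy_iff_ediam_image.1 hx δ hδ
  obtain ⟨B, hB⟩ := hcover _ hdiam
  have hNB : N ⊆ ⋃ b ∈ B, (f ∘ x) ⁻¹' ball b (ε / 2) := fun n hn => by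
    simpa using hB (mem_image_of_mem f (mem_image_of_mem x hn))
  obtain ⟨b, -, hb⟩ := hN.exists_infinite_inter_of_subset_biUnion hNB
  refine ⟨_, hb, fun n hn j hj => ?_⟩
  calc dist (f (x n)) (f (x j)) ≤ dist (f (x n)) b + dist (f (x j)) b := dist_triangle_right _ _ _
    _ < ε / 2 + ε / 2 := add_lt_add hn.2 hj.2
    _ = ε := add_halves ε

theorem almostBounded_of_cofinallyCauchy_comp
    (hf : ∀ x : ℕ → X, CofinallyCauchy x → CofinallyCauchy (f ∘ x)) : AlmostBounded f := by
  by_contra hAB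
  obtain ⟨ε, hε, hbad⟩ : ∃ ε > 0, ∀ n : ℕ, ∃ A : Set X,
      ediam A < ENNReal.ofReal (1 / (n + 1)) ∧ ∀ B : Finset Y, ¬ f '' A ⊆ ⋃ b ∈ B, ball b ε := by
    unfold AlmostBounded at hAB
    push Not at hAB
    obtain ⟨ε, hε, hδ⟩ := hAB
    exact ⟨ε, hε, fun n => hδ _ Nat.one_div_pos_of_nat⟩
  choose A hAdiam hAcover using hbad
  have hescape : ∀ n (s : Finset X), ∃ a ∈ A (Nat.unpair n).1, ∀ x ∈ s, ε ≤ dist (f x) (f a) := by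
    intro n s
    classical
    obtain ⟨_, ⟨a, ha, rfl⟩, hfar⟩ := not_subset.1 (hAcover (Nat.unpair n).1 (s.image f))
    refine ⟨a, ha, fun x hx => not_lt.1 fun hlt => hfar ?_⟩
    exact mem_iUnion₂.2 ⟨f x, Finset.mem_image_of_mem f hx, mem_ball'.2 hlt⟩
  obtain ⟨x, hxA, hsep⟩ := exists_seq_mem_of_forall_finset_exists _ _ hescape
  have hAsmall : ∀ δ > 0, ∃ n, ediam (A n) < ENNReal.ofReal δ := fun δ hδ => by
    obtain ⟨n, hn⟩ := exists_nat_one_div_lt hδ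
    exact ⟨n, (hAdiam n).trans_le (ENNReal.ofReal_le_ofReal hn.le)⟩
  exact not_cofinallyCauchy_of_le_dist hε hsep (hf x (cofinallyCauchy_of_mem_unpair hAsmall hxA))

end AlmostBounded

/-- A function between metric spaces is CC-regular iff it is almost bounded. -/
theorem ccRegular_iff_almostBounded {X Y : Type*} [MetricSpace X] [MetricSpace Y]
    (f : X → Y) :
    (∀ x : ℕ → X, CofinallyCauchy x → CofinallyCauchy (fun n => f (x n))) ↔
      AlmostBounded f :=
  ⟨almostBounded_of_cofinallyCauchy_comp, fun hf _ => hf.cofinallyCauchy_comp⟩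
end
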